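/- Let D = 2k be even, let M ∈ ℝ^{D×D} be the block-swap matrix [[0, I_k],[I_k, 0]], let L ≥ 1, let U₁, U₂, U₃, U₄ ∈ ℝ^{L×D}, and let β₁, …, β₁₂ ∈ ℝ. Define W ∈ ℝ^{4D×4D} in D×D blocks whose (1,1), (1,3), (3,1), (3,3) blocks are β₁·I, β₂·I, β₇·I, β₈·I respectively, whose (2,2), (2,4), (4,2), (4,4) blocks are β₃·I + β₄·M, β₅·I + β₆·M, β₉·I + β₁₀·M, β₁₁·I + β₁₂·M respectively, and whose remaining blocks are zero. Then for every orthogonal matrix E ∈ ℝ^{D×D} and every block-orthogonal matrix F ∈ ℝ^{D×D} (with respect to the split D = k + k), the matrix of second-layer attention scores is invariant under the data rotation: [U₁·E | U₂·F | U₃·E | U₄·F]·W·[U₁·E | U₂·F | U₃·E | U₄·F]ᵀ = [U₁ | U₂ | U₃ | U₄]·W·[U₁ | U₂ | U₃ | U₄]ᵀ, where [· | ·] denotes horizontal concatenation of matrices. -/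

import Mathlib

open Matrix

/-- A matrix `E` is orthogonal if `E·Eᵀ = Eᵀ·E = 1`. -/
def IsOrthoMat {m : Type*} [Fintype m] [DecidableEq m] (E : Matrix m m ℝ) : Prop :=
  E * Eᵀ = 1 ∧ Eᵀ * E = 1

/-- A `2k×2k` matrix `F` is block-orthogonal if, for some orthogonal `k×k` matrix `E₀`,
either `F = [[E₀,0],[0,E₀]]` or `F = [[0,E₀],[E₀,0]]` in `k×k` blocks. -/
def IsBlockOrthoMat {k : ℕ} (F : Matrix (Fin k ⊕ Fin k) (Fin k ⊕ Fin k) ℝ) : Prop :=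
  ∃ E₀ : Matrix (Fin k) (Fin k) ℝ, IsOrthoMat E₀ ∧
    (F = Matrix.fromBlocks E₀ 0 0 E₀ ∨ F = Matrix.fromBlocks 0 E₀ E₀ 0)

/-- Index type for `ℝ^D` with `D = 2k` split as `k + k`. -/
abbrev DIx (k : ℕ) := Fin k ⊕ Fin k

/-- The block-swap matrix `M = [[0, I_k],[I_k, 0]]` on `ℝ^D` with `D = 2k`. -/
def blockSwap (k : ℕ) : Matrix (DIx k) (DIx k) ℝ :=
  Matrix.fromBlocks 0 1 1 0

/-- The structured second-layer weight matrix `W ∈ ℝ^{4D×4D}`, in `D×D` blocks: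
blocks (1,1)=β₁I, (1,3)=β₂I, (3,1)=β₇I, (3,3)=β₈I, (2,2)=β₃I+β₄M, (2,4)=β₅I+β₆M,
(4,2)=β₉I+β₁₀M, (4,4)=β₁₁I+β₁₂M, all other blocks zero.  Rows and columns are grouped
as ((1,2),(3,4)). -/
def Wsecond (k : ℕ) (β₁ β₂ β₃ β₄ β₅ β₆ β₇ β₈ β₉ β₁₀ β₁₁ β₁₂ : ℝ) :
    Matrix ((DIx k ⊕ DIx k) ⊕ (DIx k ⊕ DIx k)) ((DIx k ⊕ DIx k) ⊕ (DIx k ⊕ DIx k)) ℝ :=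
  Matrix.fromBlocks
    (Matrix.fromBlocks (β₁ • 1) 0 0 (β₃ • 1 + β₄ • blockSwap k))
    (Matrix.fromBlocks (β₂ • 1) 0 0 (β₅ • 1 + β₆ • blockSwap k))
    (Matrix.fromBlocks (β₇ • 1) 0 0 (β₉ • 1 + β₁₀ • blockSwap k))
    (Matrix.fromBlocks (β₈ • 1) 0 0 (β₁₁ • 1 + β₁₂ • blockSwap k))

/-! Stacking the rotated inputs is right multiplication by `G = diag(P, P)` with
`P = diag(E, F)`, so the score matrix is invariant as soon as `G W Gᵀ = W`. Conjugation
by a block-diagonal matrix acts blockwise, so this reduces to `E (aI) Eᵀ = aI` and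
`F (bI + cM) Fᵀ = bI + cM`; the latter holds because both shapes of a block-orthogonal
`F` commute with the block swap `M`. -/

namespace Matrix

variable {R m n o p q : Type*} [Semiring R] [Fintype m] [Fintype n]

theorem fromBlocks_diag_mul_fromBlocks_mul_transpose (P : Matrix o m R) (Q : Matrix p n R)
    (A : Matrix m m R) (B : Matrix m n R) (C : Matrix n m R) (D : Matrix n n R) :
    fromBlocks P 0 0 Q * fromBlocks A B C D * (fromBlocks P 0 0 Q)ᵀ =
      fromBlocks (P * A * Pᵀ) (P * B * Qᵀ) (Q * C * Pᵀ) (Q * D * Qᵀ) := by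
  simp only [fromBlocks_transpose, transpose_zero, fromBlocks_multiply, Matrix.mul_zero,
    Matrix.zero_mul, add_zero, zero_add]

theorem fromCols_mul_fromBlocks_diag (A₁ : Matrix q m R) (A₂ : Matrix q n R)
    (P : Matrix m o R) (Q : Matrix n p R) :
    fromCols A₁ A₂ * fromBlocks P 0 0 Q = fromCols (A₁ * P) (A₂ * Q) := by
  simp only [fromCols_mul_fromBlocks, Matrix.mul_zero, add_zero, zero_add]

theorem mul_smul_one_mul_transpose {S : Type*} [CommSemiring S] [DecidableEq m]
    {E : Matrix m m S} (hE : E * Eᵀ = 1) (a : S) : E * (a • 1) * Eᵀ = a • 1 := by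
  rw [Matrix.mul_smul, Matrix.mul_one, Matrix.smul_mul, hE]

end Matrix

namespace IsBlockOrthoMat

variable {k : ℕ} {F : Matrix (DIx k) (DIx k) ℝ}

theorem mul_transpose_self (hF : IsBlockOrthoMat F) : F * Fᵀ = 1 := by
  obtain ⟨E₀, ⟨hE₀, -⟩, rfl | rfl⟩ := hF <;>
    simp [fromBlocks_transpose, fromBlocks_multiply, hE₀, ← fromBlocks_one]

theorem mul_blockSwap_mul_transpose (hF : IsBlockOrthoMat F) :
    F * blockSwap k * Fᵀ = blockSwap k := by
  obtain ⟨E₀, ⟨hE₀, -⟩, rfl | rfl⟩ := hF <;>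
    simp [blockSwap, fromBlocks_transpose, fromBlocks_multiply, hE₀]

theorem conj_smul_one_add_smul_blockSwap (hF : IsBlockOrthoMat F) (b c : ℝ) :
    F * (b • 1 + c • blockSwap k) * Fᵀ = b • 1 + c • blockSwap k := by
  rw [Matrix.mul_add, Matrix.add_mul, mul_smul_one_mul_transpose (mul_transpose_self hF),
    Matrix.mul_smul, Matrix.smul_mul, mul_blockSwap_mul_transpose hF]

end IsBlockOrthoMat

theorem conj_fromBlocks_smul_one_smul_blockSwap {k : ℕ} {E F : Matrix (DIx k) (DIx k) ℝ}
    (hE : E * Eᵀ = 1) (hF : IsBlockOrthoMat F) (a b c : ℝ) :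
    fromBlocks E 0 0 F * fromBlocks (a • 1) 0 0 (b • 1 + c • blockSwap k) *
        (fromBlocks E 0 0 F)ᵀ =
      fromBlocks (a • 1) 0 0 (b • 1 + c • blockSwap k) := by
  rw [fromBlocks_diag_mul_fromBlocks_mul_transpose, mul_smul_one_mul_transpose hE,
    hF.conj_smul_one_add_smul_blockSwap]
  simp only [Matrix.mul_zero, Matrix.zero_mul]

theorem Wsecond_conj {k : ℕ} {E F : Matrix (DIx k) (DIx k) ℝ} (hE : E * Eᵀ = 1)
    (hF : IsBlockOrthoMat F) (β₁ β₂ β₃ β₄ β₅ β₆ β₇ β₈ β₉ β₁₀ β₁₁ β₁₂ : ℝ) :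
    let G := fromBlocks (fromBlocks E 0 0 F) 0 0 (fromBlocks E 0 0 F)
    G * Wsecond k β₁ β₂ β₃ β₄ β₅ β₆ β₇ β₈ β₉ β₁₀ β₁₁ β₁₂ * Gᵀ =
      Wsecond k β₁ β₂ β₃ β₄ β₅ β₆ β₇ β₈ β₉ β₁₀ β₁₁ β₁₂ := by
  simp only [Wsecond, fromBlocks_diag_mul_fromBlocks_mul_transpose,
    conj_fromBlocks_smul_one_smul_blockSwap hE hF]

theorem stmt5_general (k : ℕ) (L : ℕ)
    (U₁ U₂ U₃ U₄ : Matrix (Fin L) (DIx k) ℝ)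
    (β₁ β₂ β₃ β₄ β₅ β₆ β₇ β₈ β₉ β₁₀ β₁₁ β₁₂ : ℝ)
    (E : Matrix (DIx k) (DIx k) ℝ) (hE : IsOrthoMat E)
    (F : Matrix (DIx k) (DIx k) ℝ) (hF : IsBlockOrthoMat F) :
    Matrix.fromCols (Matrix.fromCols (U₁ * E) (U₂ * F))
        (Matrix.fromCols (U₃ * E) (U₄ * F)) *
      Wsecond k β₁ β₂ β₃ β₄ β₅ β₆ β₇ β₈ β₉ β₁₀ β₁₁ β₁₂ *
      (Matrix.fromCols (Matrix.fromCols (U₁ * E) (U₂ * F))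
        (Matrix.fromCols (U₃ * E) (U₄ * F)))ᵀ =
    Matrix.fromCols (Matrix.fromCols U₁ U₂) (Matrix.fromCols U₃ U₄) *
      Wsecond k β₁ β₂ β₃ β₄ β₅ β₆ β₇ β₈ β₉ β₁₀ β₁₁ β₁₂ *
      (Matrix.fromCols (Matrix.fromCols U₁ U₂) (Matrix.fromCols U₃ U₄))ᵀ := by
  set X := Matrix.fromCols (Matrix.fromCols U₁ U₂) (Matrix.fromCols U₃ U₄)
  set W := Wsecond k β₁ β₂ β₃ β₄ β₅ β₆ β₇ β₈ β₉ β₁₀ β₁₁ β₁₂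
  set G := fromBlocks (fromBlocks E 0 0 F) 0 0 (fromBlocks E 0 0 F)
  have hX : Matrix.fromCols (Matrix.fromCols (U₁ * E) (U₂ * F))
      (Matrix.fromCols (U₃ * E) (U₄ * F)) = X * G := by
    simp only [X, G, fromCols_mul_fromBlocks_diag]
  rw [hX]
  calc X * G * W * (X * G)ᵀ = X * (G * W * Gᵀ) * Xᵀ := by
        simp only [transpose_mul, Matrix.mul_assoc]
    _ = X * W * Xᵀ := by rw [Wsecond_conj hE.1 hF]

/-- Invariance of the second-layer attention scores under data rotations: for every
orthogonal `E` and block-orthogonal `F`,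
`[U₁·E | U₂·F | U₃·E | U₄·F]·W·[U₁·E | U₂·F | U₃·E | U₄·F]ᵀ = [U₁|U₂|U₃|U₄]·W·[U₁|U₂|U₃|U₄]ᵀ`. -/
theorem stmt5 (k : ℕ) (hk : 1 ≤ k) (L : ℕ) (hL : 1 ≤ L)
    (U₁ U₂ U₃ U₄ : Matrix (Fin L) (DIx k) ℝ)
    (β₁ β₂ β₃ β₄ β₅ β₆ β₇ β₈ β₉ β₁₀ β₁₁ β₁₂ : ℝ)
    (E : Matrix (DIx k) (DIx k) ℝ) (hE : IsOrthoMat E)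
    (F : Matrix (DIx k) (DIx k) ℝ) (hF : IsBlockOrthoMat F) :
    Matrix.fromCols (Matrix.fromCols (U₁ * E) (U₂ * F))
        (Matrix.fromCols (U₃ * E) (U₄ * F)) *
      Wsecond k β₁ β₂ β₃ β₄ β₅ β₆ β₇ β₈ β₉ β₁₀ β₁₁ β₁₂ *
      (Matrix.fromCols (Matrix.fromCols (U₁ * E) (U₂ * F))
        (Matrix.fromCols (U₃ * E) (U₄ * F)))ᵀ =
    Matrix.fromCols (Matrix.fromCols U₁ U₂) (Matrix.fromCols U₃ U₄) *
      Wsecond k β₁ β₂ β₃ β₄ β₅ β₆ β₇ β₈ β₉ β₁₀ β₁₁ β₁₂ *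
      (Matrix.fromCols (Matrix.fromCols U₁ U₂) (Matrix.fromCols U₃ U₄))ᵀ :=
  stmt5_general k L U₁ U₂ U₃ U₄ β₁ β₂ β₃ β₄ β₅ β₆ β₇ β₈ β₉ β₁₀ β₁₁ β₁₂ E hE F hF
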